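/- arXiv:math/0507239 — 2 statements merged into one kernel-verified Lean document; each statement's English description precedes it below -/
import Mathlib

section
/- Let (G, E₀, ∂, ▷) be a pre-crossed module in which E₀ is the free group on pairs (X, m) with X ∈ G, m ∈ K, with G-action Y ▷ (X, m) = (YX, m) and boundary ∂(X, m) = X ∂₀(m) X⁻¹ for a given map ∂₀ : K → G. Then the map i : K → E₀/[[E₀,E₀]] sending m to the class of (1, m) is injective. -/
/-- The action of `Y : G` on the free group on `G × K`: on generators, `Y ▷ (X,m) = (YX,m)`. -/
def freeAct {G K : Type*} [Group G] (Y : G) :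
    FreeGroup (G × K) →* FreeGroup (G × K) :=
  FreeGroup.map (fun p => (Y * p.1, p.2))

/-- The boundary homomorphism on the free group on `G × K`, determined on generators by
`∂(X,m) = X ∂₀(m) X⁻¹`. -/
def freeBnd {G K : Type*} [Group G] (d0 : K → G) : FreeGroup (G × K) →* G :=
  FreeGroup.lift (fun p => p.1 * d0 p.2 * p.1⁻¹)

/-- The Peiffer subgroup [[E₀,E₀]] of the free pre-crossed module on `∂₀ : K → G`:
the subgroup generated by all Peiffer commutators e f e⁻¹ (∂(e) ▷ f⁻¹). -/
def freePeifferSubgroup {G K : Type*} [Group G] (d0 : K → G) :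
    Subgroup (FreeGroup (G × K)) :=
  Subgroup.closure
    {x | ∃ e f : FreeGroup (G × K), x = e * f * e⁻¹ * freeAct (freeBnd d0 e) f⁻¹}

open Classical in
/-- Counting occurrences (with sign) of generators `(X, m)` with fixed `m`. -/
noncomputable def cnt {G K : Type*} [Group G] (m : K) :
    FreeGroup (G × K) →* Multiplicative ℤ :=
  FreeGroup.lift (fun p => Multiplicative.ofAdd (if p.2 = m then (1 : ℤ) else 0))

lemma cnt_act {G K : Type*} [Group G] (m : K) (Y : G) (f : FreeGroup (G × K)) :
    cnt m (freeAct Y f) = cnt m f := by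
  have : (cnt m).comp (freeAct (K := K) Y) = cnt m := by
    apply FreeGroup.ext_hom
    intro p
    simp [cnt, freeAct]
  exact DFunLike.congr_fun this f

/-- the map `i : K → E₀/[[E₀,E₀]]`, sending `m` to the class of the
generator `(1, m)`, is injective. -/
theorem freeCrossedModule_generators_injective
    {G K : Type*} [Group G] (d0 : K → G) :
    Function.Injective
      (fun m : K =>
        (QuotientGroup.mk (FreeGroup.of ((1 : G), m)) :
          FreeGroup (G × K) ⧸ freePeifferSubgroup d0)) := by
  intro m₁ m₂ h
  by_contra hne
  have hker : freePeifferSubgroup d0 ≤ (cnt (G := G) m₁).ker := by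
    rw [freePeifferSubgroup, Subgroup.closure_le]
    rintro x ⟨e, f, rfl⟩
    simp only [SetLike.mem_coe, MonoidHom.mem_ker, map_mul, map_inv, cnt_act]
    rw [mul_inv_eq_one, mul_inv_eq_iff_eq_mul]
    exact mul_comm _ _
  have hmem : (FreeGroup.of ((1 : G), m₁))⁻¹ * FreeGroup.of ((1 : G), m₂) ∈
      freePeifferSubgroup d0 := (QuotientGroup.eq).mp h
  have := hker hmem
  rw [MonoidHom.mem_ker, map_mul, map_inv] at this
  simp only [cnt, FreeGroup.lift_apply_of] at this
  rw [if_pos trivial, if_neg (fun hh => hne (hh.symm))] at this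
  simp at this
end

section
/- Let 𝒢 = (G, E, ∂, ▷) be the free crossed module on a map ∂₀ : K → G (with inclusion i : K → E, ∂ ∘ i = ∂₀). Let 𝒢' = (G', E', ∂', ▷') be any crossed module, φ : G → G' a group homomorphism, and ψ₀ : K → E' a map with ∂' ∘ ψ₀ = φ ∘ ∂₀. Then there exists a unique group homomorphism ψ : E → E' with ψ ∘ i = ψ₀ such that (φ, ψ) is a morphism of crossed modules. -/
structure CrossedModule (G E : Type*) [Group G] [Group E] where
  bnd : E →* G
  act : G →* MulAut E
  cond1 : ∀ (X : G) (e : E), bnd (act X e) = X * bnd e * X⁻¹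
  cond2 : ∀ e f : E, act (bnd e) f = e * f * e⁻¹

/-- (strong universal property of the free crossed module
`E = E₀/[[E₀,E₀]]` on `∂₀ : K → G`, with `i(m)` the class of the generator `(1,m)`).
Given any crossed module `(G', E', ∂', ▷')`, a homomorphism `φ : G → G'` and a map
`ψ₀ : K → E'` with `∂' ∘ ψ₀ = φ ∘ ∂₀`, there is a unique group homomorphism
`ψ : E → E'` with `ψ ∘ i = ψ₀` such that `(φ, ψ)` is a morphism of crossed modules
(i.e. `∂' ∘ ψ = φ ∘ ∂` and `ψ(Y ▷ w) = φ(Y) ▷' ψ(w)`). -/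
theorem freeCrossedModule_universal_property
    {G K G' E' : Type*} [Group G] [Group G'] [Group E']
    (d0 : K → G) (hN : (freePeifferSubgroup d0).Normal)
    (C' : CrossedModule G' E') (φ : G →* G') (ψ0 : K → E')
    (hψ0 : ∀ m : K, C'.bnd (ψ0 m) = φ (d0 m)) :
    letI := hN
    ∃! ψ : (FreeGroup (G × K) ⧸ freePeifferSubgroup d0) →* E',
      (∀ m : K, ψ (QuotientGroup.mk (FreeGroup.of ((1 : G), m))) = ψ0 m) ∧
      (∀ w : FreeGroup (G × K),
        C'.bnd (ψ (QuotientGroup.mk w)) = φ (freeBnd d0 w)) ∧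
      (∀ (Y : G) (w : FreeGroup (G × K)),
        ψ (QuotientGroup.mk (freeAct Y w)) = C'.act (φ Y) (ψ (QuotientGroup.mk w))) := by
  classical
  set ψ1 : FreeGroup (G × K) →* E' :=
    FreeGroup.lift (fun p => C'.act (φ p.1) (ψ0 p.2)) with hψ1
  have h1 : ∀ w, C'.bnd (ψ1 w) = φ (freeBnd d0 w) := by
    have : C'.bnd.comp ψ1 = φ.comp (freeBnd d0) := by
      apply FreeGroup.ext_hom
      intro p
      simp [hψ1, freeBnd, C'.cond1, hψ0]
    exact fun w => DFunLike.congr_fun this w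
  have h2 : ∀ (Y : G) (w : FreeGroup (G × K)),
      ψ1 (freeAct Y w) = C'.act (φ Y) (ψ1 w) := by
    intro Y
    have : ψ1.comp (freeAct Y) =
        (C'.act (φ Y)).toMonoidHom.comp ψ1 := by
      apply FreeGroup.ext_hom
      intro p
      simp [hψ1, freeAct, map_mul, MulAut.mul_apply]
    exact fun w => DFunLike.congr_fun this w
  have hker : freePeifferSubgroup d0 ≤ ψ1.ker := by
    rw [freePeifferSubgroup, Subgroup.closure_le]
    rintro x ⟨e, f, rfl⟩
    have key : ψ1 (freeAct (freeBnd d0 e) f) = ψ1 e * ψ1 f * (ψ1 e)⁻¹ := by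
      rw [h2, ← h1, C'.cond2]
    rw [SetLike.mem_coe, MonoidHom.mem_ker]
    simp only [map_mul, map_inv, key]
    group
  set ψ : (FreeGroup (G × K) ⧸ freePeifferSubgroup d0) →* E' :=
    QuotientGroup.lift _ ψ1 hker with hψdef
  have hlift : ∀ w : FreeGroup (G × K), ψ (QuotientGroup.mk w) = ψ1 w :=
    fun w => rfl
  refine ⟨ψ, ⟨?_, ?_, ?_⟩, ?_⟩
  · intro m
    simp [hlift, hψ1]
  · intro w; rw [hlift]; exact h1 w
  · intro Y w; rw [hlift, hlift]; exact h2 Y w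
  · rintro ψ' ⟨ha, -, hc⟩
    have : ψ'.comp (QuotientGroup.mk' (freePeifferSubgroup d0)) =
        ψ.comp (QuotientGroup.mk' (freePeifferSubgroup d0)) := by
      apply FreeGroup.ext_hom
      intro p
      have hp : FreeGroup.of p = freeAct p.1 (FreeGroup.of ((1 : G), p.2)) := by
        simp [freeAct]
      calc ψ' (QuotientGroup.mk (FreeGroup.of p))
          = ψ' (QuotientGroup.mk (freeAct p.1 (FreeGroup.of ((1:G), p.2)))) := by rw [← hp]
        _ = C'.act (φ p.1) (ψ' (QuotientGroup.mk (FreeGroup.of ((1:G), p.2)))) := hc _ _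
        _ = C'.act (φ p.1) (ψ0 p.2) := by rw [ha]
        _ = ψ (QuotientGroup.mk (FreeGroup.of p)) := by simp [hlift, hψ1]
    exact QuotientGroup.monoidHom_ext _ this
end
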